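/- arXiv:2204.09944 — 2 statements merged into one kernel-verified Lean document; each statement's English description precedes it below -/
import Mathlib

section
/- (Shisha–Mond, equal-one case) Let {Lₙ} be positive linear operators on C[a,b] with Lₙ(1) = 1. Then for every f ∈ C[a,b], ‖f - Lₙ(f)‖_∞ ≤ 2·ω(f, μₙ), where μₙ² = sup_{x∈[a,b]} Lₙ((t-x)²)(x), provided μₙ > 0. -/
/-!
For `x` fixed and `δ > 0`, splitting `[x, t]` into `⌈|t - x| / δ⌉` pieces of length at most `δ`
gives `|f t - f x| ≤ ω(δ) (1 + (t - x)² / δ²)` on `[a, b]`. Applying the positive normalized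
functional `g ↦ Lₙ g x` to this two-sided bound yields
`|Lₙ f x - f x| ≤ ω(δ) (1 + Lₙ((t - x)²)(x) / δ²)`, which is at most `2 ω(μₙ)` for `δ = μₙ`.
-/

open Set

/-- Modulus of continuity of `f` on a set `S`. -/
noncomputable def modulus (f : ℝ → ℝ) (S : Set ℝ) (δ : ℝ) : ℝ :=
  sSup {d : ℝ | ∃ x ∈ S, ∃ y ∈ S, |x - y| ≤ δ ∧ d = |f x - f y|}

/-- Sup-norm of `g` over a set `S`. -/
noncomputable def supN (S : Set ℝ) (g : ℝ → ℝ) : ℝ :=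
  sSup ((fun x => |g x|) '' S)

lemma supN_le {S : Set ℝ} {g : ℝ → ℝ} {C : ℝ} (hC : 0 ≤ C) (h : ∀ x ∈ S, |g x| ≤ C) :
    supN S g ≤ C :=
  Real.sSup_le (by rintro _ ⟨x, hx, rfl⟩; exact h x hx) hC

lemma Nat.ceil_le_one_add_sq (r : ℝ) : (⌈r⌉₊ : ℝ) ≤ 1 + r ^ 2 := by
  rcases le_or_gt r 1 with hr | hr
  · have : (⌈r⌉₊ : ℝ) ≤ 1 := by exact_mod_cast Nat.ceil_le.2 (by simpa using hr)
    nlinarith [sq_nonneg r]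
  · nlinarith [Nat.ceil_lt_add_one (zero_le_one.trans hr.le)]

namespace modulus

variable {f : ℝ → ℝ} {S : Set ℝ} {δ : ℝ}

lemma nonneg : 0 ≤ modulus f S δ :=
  Real.sSup_nonneg (by rintro _ ⟨x, -, y, -, -, rfl⟩; exact abs_nonneg _)

lemma abs_sub_le (hS : IsCompact S) (hf : ContinuousOn f S) {x y : ℝ} (hx : x ∈ S) (hy : y ∈ S)
    (hxy : |x - y| ≤ δ) : |f x - f y| ≤ modulus f S δ := by
  obtain ⟨M, hM⟩ := hS.exists_bound_of_continuousOn hf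
  have hbdd : BddAbove {d : ℝ | ∃ x ∈ S, ∃ y ∈ S, |x - y| ≤ δ ∧ d = |f x - f y|} := by
    refine ⟨M + M, ?_⟩
    rintro _ ⟨x, hx, y, hy, -, rfl⟩
    exact (abs_sub _ _).trans (add_le_add (hM x hx) (hM y hy))
  exact le_csSup hbdd ⟨x, hx, y, hy, hxy, rfl⟩

variable [OrdConnected S]

lemma abs_sub_le_nat_mul_of_le (hS : IsCompact S) (hf : ContinuousOn f S) (hδ : 0 ≤ δ) (m : ℕ)
    {x y : ℝ} (hx : x ∈ S) (hy : y ∈ S) (hxy : x ≤ y) (h : y - x ≤ m * δ) :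
    |f y - f x| ≤ m * modulus f S δ := by
  induction m generalizing x with
  | zero => simp [le_antisymm hxy (by simpa using h)]
  | succ m ih =>
    set z := min y (x + δ)
    have hxz : x ≤ z := le_min hxy (by linarith)
    have hz : z ∈ S := Set.Icc_subset S hx hy ⟨hxz, min_le_left _ _⟩
    have hzx : |z - x| ≤ δ := by
      rw [abs_of_nonneg (sub_nonneg.2 hxz)]
      linarith [min_le_right y (x + δ)]
    have hyz : y - z ≤ m * δ := by
      push_cast at h
      rcases min_cases y (x + δ) with ⟨hzy, -⟩ | ⟨hzy, -⟩ <;> simp only [z, hzy] <;>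
        nlinarith [(Nat.cast_nonneg m : (0 : ℝ) ≤ m)]
    calc |f y - f x| ≤ |f y - f z| + |f z - f x| := _root_.abs_sub_le _ _ _
      _ ≤ m * modulus f S δ + modulus f S δ :=
        add_le_add (ih hz (min_le_left _ _) hyz) (abs_sub_le hS hf hz hx hzx)
      _ = (m + 1 : ℕ) * modulus f S δ := by push_cast; ring

lemma abs_sub_le_nat_mul (hS : IsCompact S) (hf : ContinuousOn f S) (hδ : 0 ≤ δ) (m : ℕ)
    {x y : ℝ} (hx : x ∈ S) (hy : y ∈ S) (h : |y - x| ≤ m * δ) :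
    |f y - f x| ≤ m * modulus f S δ := by
  rcases le_total x y with hxy | hxy
  · exact abs_sub_le_nat_mul_of_le hS hf hδ m hx hy hxy ((le_abs_self _).trans h)
  · rw [abs_sub_comm] at h ⊢
    exact abs_sub_le_nat_mul_of_le hS hf hδ m hy hx hxy ((le_abs_self _).trans h)

lemma abs_sub_le_add_mul_sq (hS : IsCompact S) (hf : ContinuousOn f S) (hδ : 0 < δ)
    {x t : ℝ} (hx : x ∈ S) (ht : t ∈ S) :
    |f t - f x| ≤ modulus f S δ + modulus f S δ / δ ^ 2 * (t - x) ^ 2 := by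
  set r := |t - x| / δ
  have hsteps : |t - x| ≤ ⌈r⌉₊ * δ := (div_le_iff₀ hδ).1 (Nat.le_ceil r)
  have hr : r ^ 2 = (t - x) ^ 2 / δ ^ 2 := by rw [div_pow, sq_abs]
  calc |f t - f x| ≤ ⌈r⌉₊ * modulus f S δ := abs_sub_le_nat_mul hS hf hδ.le _ hx ht hsteps
    _ ≤ (1 + r ^ 2) * modulus f S δ := by gcongr; exacts [nonneg, Nat.ceil_le_one_add_sq r]
    _ = modulus f S δ + modulus f S δ / δ ^ 2 * (t - x) ^ 2 := by rw [hr]; ring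

end modulus

lemma abs_apply_sub_le_of_forall_abs_sub_le {α : Type*} {S : Set α} (Φ : (α → ℝ) →ₗ[ℝ] ℝ)
    (hpos : ∀ g : α → ℝ, (∀ t ∈ S, 0 ≤ g t) → 0 ≤ Φ g) (hone : Φ (fun _ => 1) = 1)
    {f q : α → ℝ} {c A B : ℝ} (h : ∀ t ∈ S, |f t - c| ≤ A + B * q t) :
    |Φ f - c| ≤ A + B * Φ q := by
  have hΦ : ∀ s : ℝ, Φ (fun t => A + B * q t + s * (f t - c)) = A + B * Φ q + s * (Φ f - c) := by
    intro s
    have : (fun t => A + B * q t + s * (f t - c)) =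
        (A - s * c) • (fun _ => (1 : ℝ)) + B • q + s • f := by
      funext t; simp only [Pi.add_apply, Pi.smul_apply, smul_eq_mul]; ring
    rw [this, map_add, map_add, map_smul, map_smul, map_smul, hone, smul_eq_mul, smul_eq_mul,
      smul_eq_mul]
    ring
  have hplus := hΦ 1 ▸ hpos _ fun t ht => by linarith [(abs_le.1 (h t ht)).1]
  have hminus := hΦ (-1) ▸ hpos _ fun t ht => by linarith [(abs_le.1 (h t ht)).2]
  exact abs_le.2 ⟨by linarith, by linarith⟩

theorem shisha_mond_normalized_general (a b : ℝ)
    (L : ℕ → (ℝ → ℝ) →ₗ[ℝ] (ℝ → ℝ))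
    (hpos : ∀ (n : ℕ) (g : ℝ → ℝ), (∀ t ∈ Icc a b, 0 ≤ g t) →
      ∀ x ∈ Icc a b, 0 ≤ L n g x)
    (hone : ∀ n : ℕ, L n (fun _ => 1) = fun _ => 1)
    (f : ℝ → ℝ) (hf : ContinuousOn f (Icc a b))
    (n : ℕ) (μn : ℝ) (hμpos : 0 < μn)
    (hμ : μn ^ 2 = sSup ((fun x => L n (fun t => (t - x) ^ 2) x) '' Icc a b)) :
    supN (Icc a b) (fun x => f x - L n f x) ≤ 2 * modulus f (Icc a b) μn := by
  set ω := modulus f (Icc a b) μn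
  have hbdd : BddAbove ((fun x => L n (fun t => (t - x) ^ 2) x) '' Icc a b) := by
    -- an unbounded set of reals has `sSup = 0`, which `0 < μn` rules out
    by_contra h
    rw [Real.sSup_of_not_bddAbove h] at hμ
    nlinarith
  refine supN_le (by linarith [modulus.nonneg (f := f) (S := Icc a b) (δ := μn)]) fun x hx => ?_
  have hmoment : L n (fun t => (t - x) ^ 2) x ≤ μn ^ 2 := hμ ▸ le_csSup hbdd ⟨x, hx, rfl⟩
  have hlocal := abs_apply_sub_le_of_forall_abs_sub_le ((LinearMap.proj x).comp (L n))
    (fun g hg => hpos n g hg x hx) (congrFun (hone n) x)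
    fun t ht => modulus.abs_sub_le_add_mul_sq isCompact_Icc hf hμpos hx ht
  calc |f x - L n f x| = |L n f x - f x| := abs_sub_comm _ _
    _ ≤ ω + ω / μn ^ 2 * L n (fun t => (t - x) ^ 2) x := hlocal
    _ ≤ ω + ω / μn ^ 2 * μn ^ 2 := by gcongr; exact div_nonneg modulus.nonneg (sq_nonneg _)
    _ = 2 * ω := by field_simp; ring

/-- Shisha–Mond quantitative Korovkin theorem, case `Lₙ(1) = 1`. -/
theorem shisha_mond_normalized (a b : ℝ) (hab : a < b)
    (L : ℕ → (ℝ → ℝ) →ₗ[ℝ] (ℝ → ℝ))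
    (hpos : ∀ (n : ℕ) (g : ℝ → ℝ), (∀ t ∈ Icc a b, 0 ≤ g t) →
      ∀ x ∈ Icc a b, 0 ≤ L n g x)
    (hone : ∀ n : ℕ, L n (fun _ => 1) = fun _ => 1)
    (f : ℝ → ℝ) (hf : ContinuousOn f (Icc a b))
    (n : ℕ) (μn : ℝ) (hμpos : 0 < μn)
    (hμ : μn ^ 2 = sSup ((fun x => L n (fun t => (t - x) ^ 2) x) '' Icc a b)) :
    supN (Icc a b) (fun x => f x - L n f x) ≤ 2 * modulus f (Icc a b) μn :=
  shisha_mond_normalized_general a b L hpos hone f hf n μn hμpos hμ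
end

section
/- For 1 ≤ p < ∞ and n ≥ 1, the L^p norm of x ↦ Kₙ((x−t)²)(x) on [0,1] satisfies ‖Kₙ((x−·)²)(x)‖_p ≤ (1/(n+1))^{1/p}. Consequently, for every f ∈ C[0,1], ‖Kₙ(f) − f‖_p ≤ 2·ω(f, (n+1)^{−1/(2p)}) up to an absolute constant in the argument of ω. -/
open Set MeasureTheory

/-- The Kantorovich polynomial operator. -/
noncomputable def K (n : ℕ) (f : ℝ → ℝ) (x : ℝ) : ℝ :=
  ((n : ℝ) + 1) * ∑ k ∈ Finset.range (n + 1),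
    (n.choose k : ℝ) * x ^ k * (1 - x) ^ (n - k) *
      ∫ t in ((k : ℝ) / ((n : ℝ) + 1))..(((k : ℝ) + 1) / ((n : ℝ) + 1)), f t

/-!
On `[0,1]` the moments of the Bernstein basis give the closed form
`Kₙ((x-·)²)(x) = ((n-1)x(1-x) + 1/3)/(n+1)²`, which lies in `[0, 1/(n+1)]`.
An `Lᵖ(0,1)` norm is at most the sup norm, and `c ≤ c^(1/p)` for `0 ≤ c ≤ 1`,
which gives the first claim.

For the second, subadditivity of `ω` along a chain of steps of length `δ` gives
`|f t - f x| ≤ (1 + (t-x)²/δ²) ω(δ)`; since `Kₙ` is positive, linear and reproduces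
constants, `|Kₙ f x - f x| ≤ (1 + Kₙ((x-·)²)(x)/δ²) ω(δ)`, which is at most `2 ω(δ)` as soon as
`δ² ≥ 1/(n+1)`. The choice `δ = (n+1)^(-1/(2p))` qualifies, so `C = 1` works.
-/

theorem intervalIntegral_rpow_rpow_one_div_le {g : ℝ → ℝ} {a b p M : ℝ} (hab : a ≤ b)
    (hp : 0 < p) (hg : ∀ x ∈ Icc a b, 0 ≤ g x ∧ g x ≤ M) :
    (∫ x in a..b, g x ^ p) ^ (1 / p) ≤ (b - a) ^ (1 / p) * M := by
  obtain ⟨hga, hgaM⟩ := hg a (left_mem_Icc.mpr hab)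
  have hM : 0 ≤ M := hga.trans hgaM
  have hint : ∫ x in a..b, g x ^ p ≤ M ^ p * (b - a) := by
    calc ∫ x in a..b, g x ^ p ≤ ‖∫ x in a..b, g x ^ p‖ := Real.le_norm_self _
      _ ≤ M ^ p * |b - a| := intervalIntegral.norm_integral_le_of_norm_le_const fun x hx => by
          obtain ⟨hgx, hgM⟩ := hg x (Ioc_subset_Icc_self (uIoc_of_le hab ▸ hx))
          rw [Real.norm_eq_abs, abs_of_nonneg (Real.rpow_nonneg hgx p)]
          exact Real.rpow_le_rpow hgx hgM hp.le
      _ = M ^ p * (b - a) := by rw [abs_of_nonneg (sub_nonneg.mpr hab)]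
  calc (∫ x in a..b, g x ^ p) ^ (1 / p) ≤ (M ^ p * (b - a)) ^ (1 / p) :=
        Real.rpow_le_rpow (intervalIntegral.integral_nonneg hab fun x hx =>
          Real.rpow_nonneg (hg x hx).1 p) hint (by positivity)
    _ = (b - a) ^ (1 / p) * M := by
        rw [Real.mul_rpow (by positivity) (sub_nonneg.mpr hab), one_div,
          Real.rpow_rpow_inv hM hp.ne', mul_comm]

theorem Nat.ceil_le_one_add_sq_s18 {α : Type*} [Field α] [LinearOrder α] [IsStrictOrderedRing α]
    [FloorSemiring α] {r : α} (hr : 0 ≤ r) : (⌈r⌉₊ : α) ≤ 1 + r ^ 2 := by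
  rcases le_total r 1 with h | h
  · have : ⌈r⌉₊ ≤ 1 := Nat.ceil_le.mpr (by simpa using h)
    have : (⌈r⌉₊ : α) ≤ 1 := by exact_mod_cast this
    nlinarith
  · nlinarith [Nat.ceil_lt_add_one hr]

theorem one_div_le_sq_rpow_neg_one_div_two_mul {N p : ℝ} (hN : 1 ≤ N) (hp : 1 ≤ p) :
    1 / N ≤ (N ^ (-(1 / (2 * p)))) ^ 2 := by
  rw [← Real.rpow_natCast, ← Real.rpow_mul (by linarith), one_div, ← Real.rpow_neg_one]
  refine Real.rpow_le_rpow_of_exponent_le hN ?_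
  rw [Nat.cast_ofNat, neg_mul, neg_le_neg_iff, one_div, mul_inv, mul_comm, ← mul_assoc,
    mul_inv_cancel₀ two_ne_zero, one_mul]
  exact inv_le_one_of_one_le₀ hp

section Modulus

variable {f : ℝ → ℝ} {S : Set ℝ} {δ x y : ℝ}

theorem bddAbove_modulus_set (hS : IsCompact S) (hf : ContinuousOn f S) (δ : ℝ) :
    BddAbove {d : ℝ | ∃ x ∈ S, ∃ y ∈ S, |x - y| ≤ δ ∧ d = |f x - f y|} := by
  obtain ⟨M, hM⟩ := hS.exists_bound_of_continuousOn hf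
  refine ⟨M + M, ?_⟩
  rintro d ⟨x, hx, y, hy, -, rfl⟩
  exact (abs_sub _ _).trans (add_le_add (hM x hx) (hM y hy))

theorem abs_sub_le_modulus (hS : IsCompact S) (hf : ContinuousOn f S) (hx : x ∈ S) (hy : y ∈ S)
    (hxy : |x - y| ≤ δ) : |f x - f y| ≤ modulus f S δ :=
  le_csSup (bddAbove_modulus_set hS hf δ) ⟨x, hx, y, hy, hxy, rfl⟩

theorem modulus_nonneg (f : ℝ → ℝ) (S : Set ℝ) (δ : ℝ) : 0 ≤ modulus f S δ :=
  Real.sSup_nonneg fun _ ⟨_, _, _, _, _, hd⟩ => hd ▸ abs_nonneg _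

theorem abs_sub_le_nat_mul_modulus (hS : IsCompact S) (hf : ContinuousOn f S) [S.OrdConnected]
    (hδ : 0 ≤ δ) (m : ℕ) (hx : x ∈ S) (hy : y ∈ S) (hxy : |x - y| ≤ m * δ) :
    |f x - f y| ≤ m * modulus f S δ := by
  wlog hle : x ≤ y generalizing x y
  · rw [abs_sub_comm] at hxy ⊢
    exact this hy hx hxy (le_of_not_ge hle)
  rw [abs_sub_comm, abs_of_nonneg (sub_nonneg.mpr hle)] at hxy
  induction m generalizing x with
  | zero => simp [le_antisymm hle (by simpa using hxy)]
  | succ m ih =>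
    rcases le_or_gt (y - x) δ with hclose | hfar
    · calc |f x - f y| ≤ modulus f S δ :=
            abs_sub_le_modulus hS hf hx hy (by rwa [abs_sub_comm, abs_of_nonneg (by linarith)])
        _ ≤ (m + 1 : ℕ) * modulus f S δ :=
            le_mul_of_one_le_left (modulus_nonneg f S δ) (by norm_cast; omega)
    · have hz : x + δ ∈ S := Set.OrdConnected.out' hx hy ⟨by linarith, by linarith⟩
      calc |f x - f y| ≤ |f x - f (x + δ)| + |f (x + δ) - f y| := abs_sub_le _ _ _
        _ ≤ modulus f S δ + m * modulus f S δ := by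
            gcongr
            · exact abs_sub_le_modulus hS hf hx hz (by simp [abs_of_nonneg hδ])
            · exact ih hz (by push_cast at hxy; linarith) (by linarith)
        _ = (m + 1 : ℕ) * modulus f S δ := by push_cast; ring

theorem abs_sub_le_one_add_sq_div_mul_modulus (hS : IsCompact S) (hf : ContinuousOn f S)
    [S.OrdConnected] (hδ : 0 < δ) (hx : x ∈ S) (hy : y ∈ S) :
    |f x - f y| ≤ (1 + (x - y) ^ 2 / δ ^ 2) * modulus f S δ := by
  have hr : 0 ≤ |x - y| / δ := by positivity
  calc |f x - f y| ≤ ⌈|x - y| / δ⌉₊ * modulus f S δ :=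
        abs_sub_le_nat_mul_modulus hS hf hδ.le _ hx hy
          ((div_le_iff₀ hδ).mp (Nat.le_ceil _))
    _ ≤ (1 + (|x - y| / δ) ^ 2) * modulus f S δ :=
        mul_le_mul_of_nonneg_right (Nat.ceil_le_one_add_sq_s18 hr) (modulus_nonneg f S δ)
    _ = (1 + (x - y) ^ 2 / δ ^ 2) * modulus f S δ := by rw [div_pow, sq_abs]

end Modulus

section Bernstein

open Polynomial

variable {R : Type*} [CommRing R] (n : ℕ) (x : R)

theorem sum_eval_bernsteinPolynomial :
    ∑ k ∈ Finset.range (n + 1), (bernsteinPolynomial R n k).eval x = 1 := by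
  simpa [eval_finsetSum] using congrArg (eval x) (bernsteinPolynomial.sum R n)

theorem sum_mul_eval_bernsteinPolynomial :
    ∑ k ∈ Finset.range (n + 1), (k : R) * (bernsteinPolynomial R n k).eval x = n * x := by
  simpa [eval_finsetSum] using congrArg (eval x) (bernsteinPolynomial.sum_smul R n)

theorem sum_sq_mul_eval_bernsteinPolynomial :
    ∑ k ∈ Finset.range (n + 1), (k : R) ^ 2 * (bernsteinPolynomial R n k).eval x =
      n * (n - 1) * x ^ 2 + n * x := by
  have h2 := congrArg (eval x) (bernsteinPolynomial.sum_mul_smul R n)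
  simp only [eval_finsetSum, nsmul_eq_mul, eval_mul, eval_natCast, eval_pow, eval_X,
    Nat.cast_mul] at h2
  have hsq (k : ℕ) : (k : R) ^ 2 = k * ((k - 1 : ℕ) : R) + k := by
    cases k with
    | zero => simp
    | succ k => push_cast [Nat.add_sub_cancel]; ring
  simp_rw [hsq, add_mul, Finset.sum_add_distrib, h2, sum_mul_eval_bernsteinPolynomial]
  cases n with
  | zero => simp
  | succ n => push_cast [Nat.add_sub_cancel]; ring

end Bernstein

section Kantorovich

open Polynomial

variable {n k : ℕ} {f g h : ℝ → ℝ} {x δ : ℝ}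

theorem K_eq_sum_bernsteinPolynomial (n : ℕ) (f : ℝ → ℝ) (x : ℝ) :
    K n f x = (n + 1) * ∑ k ∈ Finset.range (n + 1),
      (bernsteinPolynomial ℝ n k).eval x *
        ∫ t in (k : ℝ) / (n + 1)..((k : ℝ) + 1) / (n + 1), f t := by
  simp [K, bernsteinPolynomial]

theorem eval_bernsteinPolynomial_nonneg (hx : x ∈ Icc (0 : ℝ) 1) :
    0 ≤ (bernsteinPolynomial ℝ n k).eval x := by
  simp only [bernsteinPolynomial, eval_mul, eval_pow, eval_sub, eval_one, eval_X, eval_natCast]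
  exact mul_nonneg (mul_nonneg (Nat.cast_nonneg _) (pow_nonneg hx.1 _))
    (pow_nonneg (sub_nonneg.mpr hx.2) _)

theorem div_le_add_one_div (k n : ℕ) : (k : ℝ) / (n + 1) ≤ ((k : ℝ) + 1) / (n + 1) := by
  gcongr
  linarith

theorem Icc_div_subset_Icc_zero_one (hk : k ∈ Finset.range (n + 1)) :
    Icc ((k : ℝ) / (n + 1)) (((k : ℝ) + 1) / (n + 1)) ⊆ Icc 0 1 := by
  have hkn : (k : ℝ) + 1 ≤ n + 1 := by exact_mod_cast Finset.mem_range.mp hk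
  exact Icc_subset_Icc (by positivity) ((div_le_one (by positivity)).mpr hkn)

theorem IntervalIntegrable.mono_div_add_one_div (hg : IntervalIntegrable g volume 0 1)
    (hk : k ∈ Finset.range (n + 1)) :
    IntervalIntegrable g volume ((k : ℝ) / (n + 1)) (((k : ℝ) + 1) / (n + 1)) := by
  refine hg.mono_set ?_
  rw [uIcc_of_le (div_le_add_one_div k n), uIcc_of_le zero_le_one]
  exact Icc_div_subset_Icc_zero_one hk

theorem K_const_add_mul (c d : ℝ) (hg : IntervalIntegrable g volume 0 1) :
    K n (fun t => c + d * g t) x = c + d * K n g x := by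
  have hcell : ∀ k ∈ Finset.range (n + 1),
      ∫ t in (k : ℝ) / (n + 1)..((k : ℝ) + 1) / (n + 1), c + d * g t =
        c / (n + 1) + d * ∫ t in (k : ℝ) / (n + 1)..((k : ℝ) + 1) / (n + 1), g t := by
    intro k hk
    rw [intervalIntegral.integral_add intervalIntegrable_const
      ((hg.mono_div_add_one_div hk).const_mul d), intervalIntegral.integral_const,
      intervalIntegral.integral_const_mul, smul_eq_mul]
    congr 1
    field_simp
    ring
  rw [K_eq_sum_bernsteinPolynomial, K_eq_sum_bernsteinPolynomial,
    Finset.sum_congr rfl fun k hk => by rw [hcell k hk]]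
  simp only [mul_add, Finset.sum_add_distrib, ← Finset.sum_mul, sum_eval_bernsteinPolynomial,
    mul_left_comm _ d, ← Finset.mul_sum]
  field_simp

theorem K_mono (hx : x ∈ Icc (0 : ℝ) 1) (hg : IntervalIntegrable g volume 0 1)
    (hh : IntervalIntegrable h volume 0 1) (hgh : ∀ t ∈ Icc (0 : ℝ) 1, g t ≤ h t) :
    K n g x ≤ K n h x := by
  rw [K_eq_sum_bernsteinPolynomial, K_eq_sum_bernsteinPolynomial]
  gcongr with k hk
  · exact eval_bernsteinPolynomial_nonneg hx
  · exact intervalIntegral.integral_mono_on (div_le_add_one_div k n) (hg.mono_div_add_one_div hk)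
      (hh.mono_div_add_one_div hk) fun t ht => hgh t (Icc_div_subset_Icc_zero_one hk ht)

theorem abs_K_le (hx : x ∈ Icc (0 : ℝ) 1) : |K n g x| ≤ K n (fun t => |g t|) x := by
  rw [K_eq_sum_bernsteinPolynomial, K_eq_sum_bernsteinPolynomial, abs_mul,
    abs_of_nonneg (by positivity)]
  gcongr
  refine (Finset.abs_sum_le_sum_abs _ _).trans (Finset.sum_le_sum fun k _ => ?_)
  rw [abs_mul, abs_of_nonneg (eval_bernsteinPolynomial_nonneg hx)]
  gcongr
  · exact eval_bernsteinPolynomial_nonneg hx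
  · exact intervalIntegral.abs_integral_le_integral_abs (div_le_add_one_div k n)

theorem integral_sub_sq (x a b : ℝ) :
    ∫ t in a..b, (x - t) ^ 2 = ((x - a) ^ 3 - (x - b) ^ 3) / 3 := by
  simp [intervalIntegral.integral_comp_sub_left fun t => t ^ 2, integral_pow]
  norm_num

theorem K_sub_sq_self (n : ℕ) (x : ℝ) :
    K n (fun t => (x - t) ^ 2) x = ((n - 1) * x * (1 - x) + 1 / 3) / (n + 1) ^ 2 := by
  -- `(n+1) ∫ (x-t)^2` over the `k`-th cell is `(x-u)^2 - (x-u)/(n+1) + 1/(3(n+1)^2)` with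
  -- `u = k/(n+1)`; expanding in powers of `k` lets the Bernstein moments finish the computation.
  have hcell : ∀ k ∈ Finset.range (n + 1), (bernsteinPolynomial ℝ n k).eval x *
      ∫ t in (k : ℝ) / (n + 1)..((k : ℝ) + 1) / (n + 1), (x - t) ^ 2 =
        (x ^ 2 - x / (n + 1) + 1 / (3 * (n + 1) ^ 2)) / (n + 1) *
          (bernsteinPolynomial ℝ n k).eval x
        + (1 / (n + 1) ^ 2 - 2 * x / (n + 1)) / (n + 1) * (k * (bernsteinPolynomial ℝ n k).eval x)
        + 1 / (n + 1) ^ 3 * (k ^ 2 * (bernsteinPolynomial ℝ n k).eval x) := by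
    intro k _
    rw [integral_sub_sq]
    field_simp
    ring
  rw [K_eq_sum_bernsteinPolynomial, Finset.sum_congr rfl hcell, Finset.sum_add_distrib,
    Finset.sum_add_distrib, ← Finset.mul_sum, ← Finset.mul_sum, ← Finset.mul_sum,
    sum_eval_bernsteinPolynomial, sum_mul_eval_bernsteinPolynomial,
    sum_sq_mul_eval_bernsteinPolynomial]
  field_simp
  ring

theorem K_sub_sq_self_mem_Icc (hx : x ∈ Icc (0 : ℝ) 1) :
    K n (fun t => (x - t) ^ 2) x ∈ Icc 0 (1 / ((n : ℝ) + 1)) := by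
  obtain ⟨hx0, hx1⟩ := hx
  have hvar : x * (1 - x) ≤ 1 / 4 := by nlinarith [sq_nonneg (2 * x - 1)]
  have hvar0 : 0 ≤ (n : ℝ) * (x * (1 - x)) := by
    have : 0 ≤ 1 - x := by linarith
    positivity
  rw [K_sub_sq_self]
  constructor
  · apply div_nonneg _ (by positivity)
    nlinarith
  · rw [div_le_div_iff₀ (by positivity) (by positivity)]
    nlinarith

theorem abs_K_sub_le (hf : ContinuousOn f (Icc 0 1)) (hδ : 0 < δ) (hx : x ∈ Icc (0 : ℝ) 1) :
    |K n f x - f x| ≤ (1 + K n (fun t => (x - t) ^ 2) x / δ ^ 2) * modulus f (Icc 0 1) δ := by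
  set ω := modulus f (Icc 0 1) δ
  have hfi : IntervalIntegrable f volume 0 1 := hf.intervalIntegrable_of_Icc zero_le_one
  have hsq : IntervalIntegrable (fun t => (x - t) ^ 2) volume 0 1 :=
    (continuous_const.sub continuous_id).pow 2 |>.intervalIntegrable 0 1
  have hsub : K n (fun t => f t - f x) x = K n f x - f x := by
    simpa [neg_add_eq_sub] using K_const_add_mul (n := n) (x := x) (-f x) 1 hfi
  calc |K n f x - f x| = |K n (fun t => f t - f x) x| := by rw [hsub]
    _ ≤ K n (fun t => |f t - f x|) x := abs_K_le hx
    _ ≤ K n (fun t => ω + ω / δ ^ 2 * (x - t) ^ 2) x :=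
        K_mono hx (hfi.sub intervalIntegrable_const).abs
          (intervalIntegrable_const.add (hsq.const_mul _)) fun t ht =>
            (abs_sub_le_one_add_sq_div_mul_modulus isCompact_Icc hf hδ ht hx).trans_eq (by ring)
    _ = (1 + K n (fun t => (x - t) ^ 2) x / δ ^ 2) * ω := by
        rw [K_const_add_mul _ _ hsq]
        ring

theorem abs_K_sub_le_two_mul_modulus (hf : ContinuousOn f (Icc 0 1)) (hδ : 0 < δ)
    (hδn : 1 / ((n : ℝ) + 1) ≤ δ ^ 2) (hx : x ∈ Icc (0 : ℝ) 1) :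
    |K n f x - f x| ≤ 2 * modulus f (Icc 0 1) δ := by
  have hratio : K n (fun t => (x - t) ^ 2) x / δ ^ 2 ≤ 1 :=
    (div_le_one (by positivity)).mpr ((K_sub_sq_self_mem_Icc hx).2.trans hδn)
  calc |K n f x - f x| ≤ (1 + K n (fun t => (x - t) ^ 2) x / δ ^ 2) * modulus f (Icc 0 1) δ :=
        abs_K_sub_le hf hδ hx
    _ ≤ 2 * modulus f (Icc 0 1) δ := by
        gcongr
        · exact modulus_nonneg f _ δ
        · linarith

end Kantorovich

/-- `Lᵖ` bound on the second moment of the Kantorovich polynomials and the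
resulting quantitative Korovkin estimate in `Lᵖ(0,1)`. -/
theorem kantorovich_Lp_estimate (p : ℝ) (hp : 1 ≤ p) :
    (∀ n : ℕ, 1 ≤ n →
      (∫ x in (0:ℝ)..1, (K n (fun t => (x - t) ^ 2) x) ^ p) ^ (1 / p) ≤
        (1 / ((n : ℝ) + 1)) ^ (1 / p)) ∧
    ∃ C : ℝ, 0 < C ∧ ∀ f : ℝ → ℝ, ContinuousOn f (Icc 0 1) → ∀ n : ℕ, 1 ≤ n →
      (∫ x in (0:ℝ)..1, |K n f x - f x| ^ p) ^ (1 / p) ≤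
        2 * modulus f (Icc 0 1) (C * ((n : ℝ) + 1) ^ (-(1 / (2 * p)))) := by
  have hp0 : 0 < p := zero_lt_one.trans_le hp
  refine ⟨fun n _ => ?_, 1, one_pos, fun f hf n _ => ?_⟩
  · have hN : 1 / ((n : ℝ) + 1) ≤ 1 := div_le_one_of_le₀ (by simp) (by positivity)
    calc (∫ x in (0:ℝ)..1, (K n (fun t => (x - t) ^ 2) x) ^ p) ^ (1 / p)
        ≤ (1 - 0) ^ (1 / p) * (1 / ((n : ℝ) + 1)) :=
          intervalIntegral_rpow_rpow_one_div_le zero_le_one hp0 fun _ => K_sub_sq_self_mem_Icc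
      _ ≤ (1 / ((n : ℝ) + 1)) ^ (1 / p) := by
          rw [sub_zero, Real.one_rpow, one_mul]
          exact Real.self_le_rpow_of_le_one (by positivity) hN ((div_le_one hp0).mpr hp)
  · have hδ : 0 < ((n : ℝ) + 1) ^ (-(1 / (2 * p))) := by positivity
    have hδn := one_div_le_sq_rpow_neg_one_div_two_mul (by simp : (1 : ℝ) ≤ n + 1) hp
    simpa using intervalIntegral_rpow_rpow_one_div_le zero_le_one hp0 fun x hx =>
      ⟨abs_nonneg _, abs_K_sub_le_two_mul_modulus hf hδ hδn hx⟩
end
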